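/- arXiv:1803.10141 — 6 statements merged into one kernel-verified Lean document; each statement's English description precedes it below -/
import Mathlib

section
/- For every real p with p ≥ -1 and p ≠ 0, the 'p-parallel sum' map (x, y) ↦ ((x^p)⁻¹ + (y^p)⁻¹)⁻¹^(1/p) = (x^(-p) + y^(-p))^(-1/p) is jointly concave on the open positive quadrant {(x, y) : x > 0, y > 0}. In particular (p = 1), the parallel sum (x, y) ↦ (x⁻¹ + y⁻¹)⁻¹ is jointly concave on the positive quadrant. -/
/-!
A positive, positively homogeneous function on a convex cone is concave as soon as its
superlevel set `{f ≥ 1}` is convex: rescaling `x` and `y` into that set and mixing them with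
weights `f x / (f x + f y)` and `f y / (f x + f y)` gives superadditivity `f x + f y ≤ f (x + y)`.
With `s = -p ≤ 1`, the superlevel set of `(x^s + y^s)^(1/s)` is `{s ≤ s x^s + s y^s}`, which is
convex because `t ↦ s t^s` is concave on `(0, ∞)`.
-/

open Real Set

theorem Real.convexOn_rpow_of_nonpos {s : ℝ} (hs : s ≤ 0) :
    ConvexOn ℝ (Ioi 0) fun x : ℝ => x ^ s := by
  refine ⟨convex_Ioi 0, fun x hx y hy a b ha hb hab => ?_⟩
  have hlog := strictConcaveOn_log_Ioi.concaveOn.2 hx hy ha hb hab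
  simp only [smul_eq_mul] at hlog ⊢
  calc (a * x + b * y) ^ s = exp (log (a * x + b * y) * s) :=
        rpow_def_of_pos (convex_Ioi 0 hx hy ha hb hab) s
    _ ≤ exp (a * (log x * s) + b * (log y * s)) := by
        rw [exp_le_exp]
        nlinarith [mul_le_mul_of_nonpos_right hlog hs]
    _ ≤ a * exp (log x * s) + b * exp (log y * s) := convexOn_exp.2 trivial trivial ha hb hab
    _ = a * x ^ s + b * y ^ s := by rw [rpow_def_of_pos hx, rpow_def_of_pos hy]

/-- The factor `s` lets one statement cover both the convex case `s ≤ 0` and the concave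
case `0 ≤ s ≤ 1`. -/
theorem Real.concaveOn_mul_rpow {s : ℝ} (hs : s ≤ 1) :
    ConcaveOn ℝ (Ioi 0) fun x : ℝ => s * x ^ s := by
  rcases le_total s 0 with hs0 | hs0
  · refine ((convexOn_rpow_of_nonpos hs0).smul (neg_nonneg.2 hs0)).neg.congr fun x _ => ?_
    simp only [Pi.neg_apply, smul_eq_mul, neg_mul, neg_neg]
  · exact ((Real.concaveOn_rpow hs0 hs).subset Ioi_subset_Ici_self (convex_Ioi 0)).smul hs0

lemma Real.one_le_rpow_one_div_iff {s u : ℝ} (hs : s ≠ 0) (hu : 0 < u) :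
    1 ≤ u ^ (1 / s) ↔ s ≤ s * u := by
  rw [one_div]
  rcases hs.lt_or_gt with hs | hs
  · rw [le_rpow_inv_iff_of_neg one_pos hu hs, one_rpow]
    constructor <;> intro h <;> nlinarith
  · rw [le_rpow_inv_iff_of_pos zero_le_one hu.le hs, one_rpow]
    constructor <;> intro h <;> nlinarith

section Homogeneous

variable {E : Type*} [AddCommGroup E] [Module ℝ E] {C : Set E} {f : E → ℝ}

lemma add_le_apply_add_of_convex_superlevel
    (hsmul : ∀ x ∈ C, ∀ t : ℝ, 0 < t → t • x ∈ C)
    (hpos : ∀ x ∈ C, 0 < f x) (hhom : ∀ x ∈ C, ∀ t : ℝ, 0 < t → f (t • x) = t * f x)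
    (hlevel : Convex ℝ {x ∈ C | 1 ≤ f x}) {x y : E} (hx : x ∈ C) (hy : y ∈ C) :
    f x + f y ≤ f (x + y) := by
  have hA := hpos x hx
  have hB := hpos y hy
  have hAB : 0 < f x + f y := add_pos hA hB
  have hx' : (f x)⁻¹ • x ∈ {x ∈ C | 1 ≤ f x} :=
    ⟨hsmul x hx _ (inv_pos.2 hA), by rw [hhom x hx _ (inv_pos.2 hA), inv_mul_cancel₀ hA.ne']⟩
  have hy' : (f y)⁻¹ • y ∈ {x ∈ C | 1 ≤ f x} :=
    ⟨hsmul y hy _ (inv_pos.2 hB), by rw [hhom y hy _ (inv_pos.2 hB), inv_mul_cancel₀ hB.ne']⟩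
  have hmix := hlevel hx' hy' (div_pos hA hAB).le (div_pos hB hAB).le (by field_simp)
  have hsum : (f x / (f x + f y)) • (f x)⁻¹ • x + (f y / (f x + f y)) • (f y)⁻¹ • y
      = (f x + f y)⁻¹ • (x + y) := by
    rw [smul_smul, smul_smul, smul_add]
    congr 2 <;> field_simp
  rw [hsum] at hmix
  obtain ⟨hmemC, hmix⟩ := hmix
  have hxy : x + y = (f x + f y) • (f x + f y)⁻¹ • (x + y) := by
    rw [smul_smul, mul_inv_cancel₀ hAB.ne', one_smul]
  rw [hxy, hhom _ hmemC _ hAB]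
  nlinarith

lemma concaveOn_of_convex_superlevel (hC : Convex ℝ C)
    (hsmul : ∀ x ∈ C, ∀ t : ℝ, 0 < t → t • x ∈ C)
    (hpos : ∀ x ∈ C, 0 < f x) (hhom : ∀ x ∈ C, ∀ t : ℝ, 0 < t → f (t • x) = t * f x)
    (hlevel : Convex ℝ {x ∈ C | 1 ≤ f x}) : ConcaveOn ℝ C f := by
  refine ⟨hC, fun x hx y hy a b ha hb hab => ?_⟩
  rcases ha.eq_or_lt with rfl | ha
  · obtain rfl : b = 1 := by simpa using hab
    simp
  rcases hb.eq_or_lt with rfl | hb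
  · obtain rfl : a = 1 := by simpa using hab
    simp
  calc a • f x + b • f y = f (a • x) + f (b • y) := by
        rw [hhom x hx a ha, hhom y hy b hb, smul_eq_mul, smul_eq_mul]
    _ ≤ f (a • x + b • y) := add_le_apply_add_of_convex_superlevel hsmul hpos hhom hlevel
        (hsmul x hx a ha) (hsmul y hy b hb)

end Homogeneous

noncomputable def rpowSum (s : ℝ) (q : ℝ × ℝ) : ℝ := (q.1 ^ s + q.2 ^ s) ^ (1 / s)

section RpowSum

variable {s : ℝ} {q : ℝ × ℝ}

lemma rpowSum_pos (hq : 0 < q.1 ∧ 0 < q.2) : 0 < rpowSum s q := by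
  rw [rpowSum]
  exact rpow_pos_of_pos (add_pos (rpow_pos_of_pos hq.1 s) (rpow_pos_of_pos hq.2 s)) _

lemma rpowSum_smul (hs : s ≠ 0) {t : ℝ} (ht : 0 < t) (hq : 0 < q.1 ∧ 0 < q.2) :
    rpowSum s (t • q) = t * rpowSum s q := by
  rw [rpowSum, rpowSum, Prod.smul_fst, Prod.smul_snd, smul_eq_mul, smul_eq_mul,
    mul_rpow ht.le hq.1.le, mul_rpow ht.le hq.2.le, ← mul_add,
    mul_rpow (rpow_nonneg ht.le s) (add_pos (rpow_pos_of_pos hq.1 s) (rpow_pos_of_pos hq.2 s)).le,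
    ← rpow_mul ht.le, mul_one_div_cancel hs, rpow_one]

lemma concaveOn_mul_rpow_add_mul_rpow (hs : s ≤ 1) :
    ConcaveOn ℝ {q : ℝ × ℝ | 0 < q.1 ∧ 0 < q.2} fun q => s * q.1 ^ s + s * q.2 ^ s := by
  have hQ : Convex ℝ {q : ℝ × ℝ | 0 < q.1 ∧ 0 < q.2} := (convex_Ioi 0).prod (convex_Ioi 0)
  exact (((concaveOn_mul_rpow hs).comp_linearMap (LinearMap.fst ℝ ℝ ℝ)).subset
    (fun _ hq => hq.1) hQ).add
    (((concaveOn_mul_rpow hs).comp_linearMap (LinearMap.snd ℝ ℝ ℝ)).subset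
      (fun _ hq => hq.2) hQ)

lemma convex_one_le_rpowSum (hs : s ≤ 1) (hs0 : s ≠ 0) :
    Convex ℝ {q ∈ {q : ℝ × ℝ | 0 < q.1 ∧ 0 < q.2} | 1 ≤ rpowSum s q} := by
  convert (concaveOn_mul_rpow_add_mul_rpow hs).convex_ge s using 1
  ext q
  refine and_congr_right fun hq => ?_
  rw [rpowSum, one_le_rpow_one_div_iff hs0
    (add_pos (rpow_pos_of_pos hq.1 s) (rpow_pos_of_pos hq.2 s)), mul_add]

theorem concaveOn_rpowSum (hs : s ≤ 1) (hs0 : s ≠ 0) :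
    ConcaveOn ℝ {q : ℝ × ℝ | 0 < q.1 ∧ 0 < q.2} (rpowSum s) :=
  concaveOn_of_convex_superlevel ((convex_Ioi 0).prod (convex_Ioi 0))
    (fun _ hq _ ht => ⟨mul_pos ht hq.1, mul_pos ht hq.2⟩) (fun _ => rpowSum_pos)
    (fun _ hq _ ht => rpowSum_smul hs0 ht hq) (convex_one_le_rpowSum hs hs0)

end RpowSum

/-- For every real `p ≥ -1`, `p ≠ 0`, the `p`-parallel sum
`(x, y) ↦ (x^(-p) + y^(-p))^(-1/p)` is jointly concave on the open positive quadrant.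
In particular (`p = 1`) the parallel sum `(x, y) ↦ (x⁻¹ + y⁻¹)⁻¹` is jointly concave there. -/
theorem parallel_sum_concave :
    (∀ p : ℝ, -1 ≤ p → p ≠ 0 →
      ConcaveOn ℝ {q : ℝ × ℝ | 0 < q.1 ∧ 0 < q.2}
        (fun q : ℝ × ℝ => (q.1 ^ (-p) + q.2 ^ (-p)) ^ (-1 / p))) ∧
    ConcaveOn ℝ {q : ℝ × ℝ | 0 < q.1 ∧ 0 < q.2}
      (fun q : ℝ × ℝ => ((q.1)⁻¹ + (q.2)⁻¹)⁻¹) := by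
  have hparallel : ∀ p : ℝ, -1 ≤ p → p ≠ 0 →
      ConcaveOn ℝ {q : ℝ × ℝ | 0 < q.1 ∧ 0 < q.2}
        (fun q : ℝ × ℝ => (q.1 ^ (-p) + q.2 ^ (-p)) ^ (-1 / p)) := by
    intro p hp hp0
    convert concaveOn_rpowSum (s := -p) (by linarith) (neg_ne_zero.2 hp0) using 1
    funext q
    rw [rpowSum, div_neg, neg_div]
  refine ⟨hparallel, ?_⟩
  convert hparallel 1 (by norm_num) one_ne_zero using 1
  funext q
  rw [neg_div_self one_ne_zero, rpow_neg_one, rpow_neg_one, rpow_neg_one]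
end

section
/- Let p ≥ -1, p ≠ 0, and let f₁ : ℝ^{m₁} → (0, ∞) and f₂ : ℝ^{m₂} → (0, ∞) be continuous concave functions (on convex domains). Then the function (x, y) ↦ f₁(x) :ₚ f₂(y) = (f₁(x)^(-p) + f₂(y)^(-p))^(-1/p) is jointly concave on ℝ^{m₁} × ℝ^{m₂}. -/
/-!
For `p ≠ 0` put `φ t = -t ^ (-p) / p` (`parallelSumGen p`). Then `φ (a :ₚ b) = φ a + φ b`, `φ` is
strictly increasing on `(0, ∞)`, and `φ' t = t ^ (-p - 1)` is antitone exactly when `p ≥ -1`, so `φ`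
is concave. Hence `:ₚ` is monotone in each argument and its superlevel set
`{1 ≤ a :ₚ b} = {φ 1 ≤ φ a + φ b}` is convex. Since `:ₚ` is positively homogeneous, this makes it
concave on the positive quadrant: rescale two points onto the level set `{a :ₚ b = 1}` and take the
matching convex combination there. Composing the monotone concave `:ₚ` with the concave pair
`(f₁, f₂)` gives the theorem.
-/

open Set Real

section Convexity

variable {𝕜 E F β γ : Type*} [Semiring 𝕜] [PartialOrder 𝕜]
  [AddCommMonoid E] [AddCommMonoid F] [AddCommMonoid β] [PartialOrder β] [AddCommMonoid γ]
  [PartialOrder γ] [SMul 𝕜 E] [SMul 𝕜 F] [SMul 𝕜 β] [SMul 𝕜 γ]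

theorem ConcaveOn.prodMap {s : Set E} {t : Set F} {f : E → β} {g : F → γ}
    (hf : ConcaveOn 𝕜 s f) (hg : ConcaveOn 𝕜 t g) : ConcaveOn 𝕜 (s ×ˢ t) (Prod.map f g) :=
  ⟨hf.1.prod hg.1, fun _ hx _ hy _ _ ha hb hab =>
    ⟨hf.2 hx.1 hy.1 ha hb hab, hg.2 hx.2 hy.2 ha hb hab⟩⟩

theorem ConcaveOn.comp_of_mapsTo {s : Set E} {t : Set β} {f : E → β} {g : β → γ}
    (hg : ConcaveOn 𝕜 t g) (hf : ConcaveOn 𝕜 s f) (hg' : MonotoneOn g t) (hst : MapsTo f s t) :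
    ConcaveOn 𝕜 s (g ∘ f) :=
  ⟨hf.1, fun _ hx _ hy _ _ ha hb hab =>
    (hg.2 (hst hx) (hst hy) ha hb hab).trans <|
      hg' (hg.1 (hst hx) (hst hy) ha hb hab) (hst <| hf.1 hx hy ha hb hab) (hf.2 hx hy ha hb hab)⟩

end Convexity

theorem concaveOn_of_homogeneous_of_convex_one_le {E : Type*} [AddCommGroup E] [Module ℝ E]
    {C : Set E} {g : E → ℝ} (hC : Convex ℝ C) (hC_smul : ∀ t : ℝ, 0 < t → ∀ x ∈ C, t • x ∈ C)
    (hg_pos : ∀ x ∈ C, 0 < g x) (hg_smul : ∀ t : ℝ, 0 < t → ∀ x ∈ C, g (t • x) = t * g x)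
    (h_level : Convex ℝ {x ∈ C | 1 ≤ g x}) : ConcaveOn ℝ C g := by
  refine ⟨hC, fun x hx y hy a b ha hb hab => ?_⟩
  have hgx := hg_pos x hx
  have hgy := hg_pos y hy
  set σ := a * g x + b * g y
  have hσ : 0 < σ := convex_Ioi (0 : ℝ) hgx hgy ha hb hab
  have hx' : (g x)⁻¹ • x ∈ {x ∈ C | 1 ≤ g x} :=
    ⟨hC_smul _ (inv_pos.2 hgx) x hx, by rw [hg_smul _ (inv_pos.2 hgx) x hx, inv_mul_cancel₀ hgx.ne']⟩
  have hy' : (g y)⁻¹ • y ∈ {x ∈ C | 1 ≤ g x} :=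
    ⟨hC_smul _ (inv_pos.2 hgy) y hy, by rw [hg_smul _ (inv_pos.2 hgy) y hy, inv_mul_cancel₀ hgy.ne']⟩
  have hcomb : (a * g x / σ) • (g x)⁻¹ • x + (b * g y / σ) • (g y)⁻¹ • y =
      σ⁻¹ • (a • x + b • y) := by
    simp only [smul_smul, smul_add]
    congr 2 <;> field_simp
  have hz : σ⁻¹ • (a • x + b • y) ∈ {x ∈ C | 1 ≤ g x} := by
    rw [← hcomb]
    exact h_level hx' hy' (by positivity) (by positivity) (by rw [← add_div, div_self hσ.ne'])
  calc a • g x + b • g y = σ * 1 := by simp [σ]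
    _ ≤ σ * g (σ⁻¹ • (a • x + b • y)) := by gcongr; exact hz.2
    _ = g (a • x + b • y) := by rw [← hg_smul σ hσ _ hz.1, smul_inv_smul₀ hσ.ne']

noncomputable def parallelSum (p a b : ℝ) : ℝ := (a ^ (-p) + b ^ (-p)) ^ (-1 / p)

noncomputable def parallelSumGen (p t : ℝ) : ℝ := -t ^ (-p) / p

section ParallelSum

variable {p : ℝ}

theorem hasDerivAt_parallelSumGen (hp : p ≠ 0) {x : ℝ} (hx : 0 < x) :
    HasDerivAt (parallelSumGen p) (x ^ (-p - 1)) x := by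
  have h := (hasDerivAt_rpow_const (p := -p) (Or.inl hx.ne')).neg.div_const p
  rwa [show -(-p * x ^ (-p - 1)) / p = x ^ (-p - 1) by field_simp] at h

theorem strictMonoOn_parallelSumGen (hp : p ≠ 0) : StrictMonoOn (parallelSumGen p) (Ioi 0) :=
  strictMonoOn_of_deriv_pos (convex_Ioi 0)
    (fun _ hx => (hasDerivAt_parallelSumGen hp hx).continuousAt.continuousWithinAt)
    (fun x hx => by
      rw [interior_Ioi] at hx
      rw [(hasDerivAt_parallelSumGen hp hx).deriv]
      exact rpow_pos_of_pos hx _)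

theorem concaveOn_parallelSumGen (hp : -1 ≤ p) (hp0 : p ≠ 0) :
    ConcaveOn ℝ (Ioi 0) (parallelSumGen p) := by
  refine AntitoneOn.concaveOn_of_deriv (convex_Ioi 0)
    (fun _ hx => (hasDerivAt_parallelSumGen hp0 hx).continuousAt.continuousWithinAt)
    (fun _ hx =>
      (hasDerivAt_parallelSumGen hp0 (interior_subset hx)).differentiableAt.differentiableWithinAt)
    ?_
  rw [interior_Ioi]
  intro x hx y hy hxy
  rw [(hasDerivAt_parallelSumGen hp0 hx).deriv, (hasDerivAt_parallelSumGen hp0 hy).deriv]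
  exact rpow_le_rpow_of_nonpos hx hxy (by linarith)

theorem parallelSumGen_parallelSum (hp : p ≠ 0) {a b : ℝ} (ha : 0 < a) (hb : 0 < b) :
    parallelSumGen p (parallelSum p a b) = parallelSumGen p a + parallelSumGen p b := by
  have hS : 0 < a ^ (-p) + b ^ (-p) := by positivity
  rw [parallelSumGen, parallelSum, ← rpow_mul hS.le, show -1 / p * -p = 1 by field_simp, rpow_one]
  simp only [parallelSumGen]
  ring

theorem parallelSum_pos {a b : ℝ} (ha : 0 < a) (hb : 0 < b) : 0 < parallelSum p a b := by
  unfold parallelSum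
  positivity

theorem parallelSum_mul (hp : p ≠ 0) {t a b : ℝ} (ht : 0 < t) (ha : 0 < a) (hb : 0 < b) :
    parallelSum p (t * a) (t * b) = t * parallelSum p a b := by
  unfold parallelSum
  rw [mul_rpow ht.le ha.le, mul_rpow ht.le hb.le, ← mul_add,
    mul_rpow (by positivity) (by positivity), ← rpow_mul ht.le,
    show -p * (-1 / p) = 1 by field_simp, rpow_one]

theorem parallelSum_le_parallelSum (hp : p ≠ 0) {a b a' b' : ℝ} (ha : 0 < a) (hb : 0 < b)
    (haa' : a ≤ a') (hbb' : b ≤ b') : parallelSum p a b ≤ parallelSum p a' b' := by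
  have ha' : 0 < a' := ha.trans_le haa'
  have hb' : 0 < b' := hb.trans_le hbb'
  have hφ := strictMonoOn_parallelSumGen hp
  rw [← hφ.le_iff_le (parallelSum_pos ha hb) (parallelSum_pos ha' hb'),
    parallelSumGen_parallelSum hp ha hb, parallelSumGen_parallelSum hp ha' hb']
  exact add_le_add ((hφ.le_iff_le ha ha').2 haa') ((hφ.le_iff_le hb hb').2 hbb')

theorem one_le_parallelSum_iff (hp : p ≠ 0) {a b : ℝ} (ha : 0 < a) (hb : 0 < b) :
    1 ≤ parallelSum p a b ↔ parallelSumGen p 1 ≤ parallelSumGen p a + parallelSumGen p b := by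
  rw [← parallelSumGen_parallelSum hp ha hb,
    (strictMonoOn_parallelSumGen hp).le_iff_le (mem_Ioi.2 one_pos) (parallelSum_pos ha hb)]

theorem monotoneOn_parallelSum (hp : p ≠ 0) :
    MonotoneOn (fun u : ℝ × ℝ => parallelSum p u.1 u.2) (Ioi 0 ×ˢ Ioi 0) :=
  fun _ hu _ _ huv => parallelSum_le_parallelSum hp hu.1 hu.2 huv.1 huv.2

theorem concaveOn_parallelSum (hp : -1 ≤ p) (hp0 : p ≠ 0) :
    ConcaveOn ℝ (Ioi 0 ×ˢ Ioi 0) (fun u : ℝ × ℝ => parallelSum p u.1 u.2) := by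
  have hC : Convex ℝ (Ioi 0 ×ˢ Ioi 0 : Set (ℝ × ℝ)) := (convex_Ioi 0).prod (convex_Ioi 0)
  have hφ := concaveOn_parallelSumGen hp hp0
  have h_level : Convex ℝ {u ∈ (Ioi 0 ×ˢ Ioi 0 : Set (ℝ × ℝ)) | 1 ≤ parallelSum p u.1 u.2} := by
    rw [sep_ext_iff.2 fun u hu => one_le_parallelSum_iff hp0 hu.1 hu.2]
    exact (((hφ.comp_linearMap (LinearMap.fst ℝ ℝ ℝ)).subset (fun _ hu => hu.1) hC).add
      ((hφ.comp_linearMap (LinearMap.snd ℝ ℝ ℝ)).subset (fun _ hu => hu.2) hC)).convex_ge _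
  exact concaveOn_of_homogeneous_of_convex_one_le hC
    (fun t ht u hu => ⟨mul_pos ht hu.1, mul_pos ht hu.2⟩)
    (fun u hu => parallelSum_pos hu.1 hu.2) (fun t ht u hu => parallelSum_mul hp0 ht hu.1 hu.2)
    h_level

end ParallelSum

theorem parallel_sum_of_concave_concave_general (m₁ m₂ : ℕ) (p : ℝ) (hp : -1 ≤ p) (hp0 : p ≠ 0)
    (C₁ : Set (Fin m₁ → ℝ)) (C₂ : Set (Fin m₂ → ℝ))
    (f₁ : (Fin m₁ → ℝ) → ℝ) (f₂ : (Fin m₂ → ℝ) → ℝ)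
    (hf₁conc : ConcaveOn ℝ C₁ f₁) (hf₂conc : ConcaveOn ℝ C₂ f₂)
    (hf₁pos : ∀ x ∈ C₁, 0 < f₁ x) (hf₂pos : ∀ y ∈ C₂, 0 < f₂ y) :
    ConcaveOn ℝ (C₁ ×ˢ C₂)
      (fun q : (Fin m₁ → ℝ) × (Fin m₂ → ℝ) =>
        (f₁ q.1 ^ (-p) + f₂ q.2 ^ (-p)) ^ (-1 / p)) :=
  (concaveOn_parallelSum hp hp0).comp_of_mapsTo (hf₁conc.prodMap hf₂conc)
    (monotoneOn_parallelSum hp0) fun _ hq => ⟨hf₁pos _ hq.1, hf₂pos _ hq.2⟩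

/-- Let `p ≥ -1`, `p ≠ 0`, and let `f₁ : ℝ^{m₁} → (0, ∞)` and
`f₂ : ℝ^{m₂} → (0, ∞)` be continuous concave functions on convex domains. Then
`(x, y) ↦ f₁(x) :ₚ f₂(y) = (f₁(x)^(-p) + f₂(y)^(-p))^(-1/p)` is jointly concave. -/
theorem parallel_sum_of_concave_concave (m₁ m₂ : ℕ) (p : ℝ) (hp : -1 ≤ p) (hp0 : p ≠ 0)
    (C₁ : Set (Fin m₁ → ℝ)) (C₂ : Set (Fin m₂ → ℝ))
    (hC₁ : Convex ℝ C₁) (hC₂ : Convex ℝ C₂)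
    (f₁ : (Fin m₁ → ℝ) → ℝ) (f₂ : (Fin m₂ → ℝ) → ℝ)
    (hf₁cont : ContinuousOn f₁ C₁) (hf₂cont : ContinuousOn f₂ C₂)
    (hf₁conc : ConcaveOn ℝ C₁ f₁) (hf₂conc : ConcaveOn ℝ C₂ f₂)
    (hf₁pos : ∀ x ∈ C₁, 0 < f₁ x) (hf₂pos : ∀ y ∈ C₂, 0 < f₂ y) :
    ConcaveOn ℝ (C₁ ×ˢ C₂)
      (fun q : (Fin m₁ → ℝ) × (Fin m₂ → ℝ) =>
        (f₁ q.1 ^ (-p) + f₂ q.2 ^ (-p)) ^ (-1 / p)) :=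
  parallel_sum_of_concave_concave_general m₁ m₂ p hp hp0 C₁ C₂ f₁ f₂ hf₁conc hf₂conc hf₁pos hf₂pos
end

section
/- Let 1 ≤ k ≤ n and p ∈ (0, 1). The function x ↦ (e_k(x^p))^(1/(pk)) is concave on the nonnegative orthant ℝ₊ⁿ. Equivalently, for all x, y ∈ ℝ₊ⁿ, (e_k((x+y)^p))^(1/(pk)) ≥ (e_k(x^p))^(1/(pk)) + (e_k(y^p))^(1/(pk)). -/
/-!
Marcus–Lopes: on the positive orthant every ratio `e_{j+1}/e_j` is superadditive. This goes by
induction on `j`, because `(j+2) e_{j+2}/e_{j+1} = Σ_i x_i r_i/(x_i + r_i)`, where `r_i` is the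
ratio `e_{j+1}/e_j` of the variables other than `x_i`, and `(a, r) ↦ a r/(a + r)` is superadditive
and increasing in `r`. As `e_k` is the product of these ratios for `j < k`, Mahler's inequality for
geometric means makes `e_k^{1/k}` superadditive.

For `f(x) = e_k(x^p)^{1/(pk)}`, put `α = f(x)`, `β = f(y)`, `l = α/(α+β)`. Concavity of `t ↦ t^p`
in perspective form gives `l^{1-p} x_i^p + (1-l)^{1-p} y_i^p ≤ (x_i + y_i)^p`, and applying the
homogeneous, superadditive `e_k^{1/k}` to this yields `(α+β)^p ≤ f(x+y)^p`. Continuity extends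
this to the closed orthant, and a superadditive 1-homogeneous function is concave.
-/

/-- The `k`-th elementary symmetric polynomial of `x ∈ ℝⁿ`:
`e_k(x) = Σ_{S ⊆ {1,…,n}, |S| = k} Π_{i ∈ S} x_i` (with `e_0 = 1`). -/
noncomputable def esymm (n k : ℕ) (x : Fin n → ℝ) : ℝ :=
  ∑ S ∈ Finset.powersetCard k (Finset.univ : Finset (Fin n)), ∏ i ∈ S, x i

open Finset

section EsymmOn

variable {ι : Type*} {A : Finset ι} {k : ℕ} {x y : ι → ℝ}

noncomputable def esymmOn (A : Finset ι) (k : ℕ) (x : ι → ℝ) : ℝ :=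
  ∑ S ∈ A.powersetCard k, ∏ i ∈ S, x i

@[simp]
lemma esymmOn_zero (A : Finset ι) (x : ι → ℝ) : esymmOn A 0 x = 1 := by
  simp [esymmOn]

lemma esymmOn_one (A : Finset ι) (x : ι → ℝ) : esymmOn A 1 x = ∑ i ∈ A, x i := by
  simp [esymmOn, powersetCard_one]

lemma esymmOn_nonneg (hx : ∀ i ∈ A, 0 ≤ x i) : 0 ≤ esymmOn A k x :=
  sum_nonneg fun _ hS ↦ prod_nonneg fun i hi ↦ hx i ((mem_powersetCard.1 hS).1 hi)

lemma esymmOn_pos (hx : ∀ i ∈ A, 0 < x i) (hk : k ≤ #A) : 0 < esymmOn A k x :=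
  sum_pos (fun _ hS ↦ prod_pos fun i hi ↦ hx i ((mem_powersetCard.1 hS).1 hi))
    (powersetCard_nonempty.2 hk)

lemma esymmOn_mono (hx : ∀ i ∈ A, 0 ≤ x i) (hxy : ∀ i ∈ A, x i ≤ y i) :
    esymmOn A k x ≤ esymmOn A k y :=
  sum_le_sum fun _ hS ↦ prod_le_prod (fun i hi ↦ hx i ((mem_powersetCard.1 hS).1 hi))
    fun i hi ↦ hxy i ((mem_powersetCard.1 hS).1 hi)

lemma esymmOn_congr (hxy : ∀ i ∈ A, x i = y i) : esymmOn A k x = esymmOn A k y :=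
  sum_congr rfl fun _ hS ↦ prod_congr rfl fun i hi ↦ hxy i ((mem_powersetCard.1 hS).1 hi)

lemma esymmOn_const_mul (A : Finset ι) (k : ℕ) (c : ℝ) (x : ι → ℝ) :
    esymmOn A k (fun i ↦ c * x i) = c ^ k * esymmOn A k x := by
  rw [esymmOn, esymmOn, mul_sum]
  refine sum_congr rfl fun S hS ↦ ?_
  rw [prod_mul_distrib, prod_const, (mem_powersetCard.1 hS).2]

lemma continuous_esymmOn (A : Finset ι) (k : ℕ) : Continuous (esymmOn A k) := by
  unfold esymmOn
  fun_prop

variable [DecidableEq ι]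

lemma mul_esymmOn_erase {i : ι} (hi : i ∈ A) (k : ℕ) (x : ι → ℝ) :
    x i * esymmOn (A.erase i) k x = ∑ T ∈ A.powersetCard (k + 1) with i ∈ T, ∏ j ∈ T, x j := by
  have hnotMem : ∀ S ∈ (A.erase i).powersetCard k, i ∉ S :=
    fun S hS h ↦ notMem_erase i A ((mem_powersetCard.1 hS).1 h)
  rw [esymmOn, mul_sum]
  refine sum_nbij' (insert i) (erase · i) ?_ ?_ ?_ ?_ ?_
  · intro S hS
    have hiS := hnotMem S hS
    simp only [mem_filter, mem_powersetCard] at hS ⊢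
    refine ⟨⟨insert_subset hi (hS.1.trans (erase_subset i A)), ?_⟩, mem_insert_self i S⟩
    rw [card_insert_of_notMem hiS, hS.2]
  · intro T hT
    simp only [mem_filter, mem_powersetCard] at hT ⊢
    exact ⟨erase_subset_erase i hT.1.1, by rw [card_erase_of_mem hT.2, hT.1.2, Nat.add_sub_cancel]⟩
  · exact fun S hS ↦ erase_insert (hnotMem S hS)
  · exact fun T hT ↦ insert_erase (mem_filter.1 hT).2
  · exact fun S hS ↦ by rw [prod_insert (hnotMem S hS)]

lemma esymmOn_succ_of_mem {i : ι} (hi : i ∈ A) (k : ℕ) (x : ι → ℝ) :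
    esymmOn A (k + 1) x = x i * esymmOn (A.erase i) k x + esymmOn (A.erase i) (k + 1) x := by
  have hfilter : {T ∈ A.powersetCard (k + 1) | i ∉ T} = (A.erase i).powersetCard (k + 1) := by
    ext T
    simp only [mem_filter, mem_powersetCard, subset_erase]
    tauto
  rw [mul_esymmOn_erase hi, esymmOn, esymmOn, ← hfilter, sum_filter_add_sum_filter_not]

lemma sum_mul_esymmOn_erase (A : Finset ι) (k : ℕ) (x : ι → ℝ) :
    ∑ i ∈ A, x i * esymmOn (A.erase i) k x = (k + 1) * esymmOn A (k + 1) x := by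
  calc ∑ i ∈ A, x i * esymmOn (A.erase i) k x
      = ∑ i ∈ A, ∑ T ∈ A.powersetCard (k + 1) with i ∈ T, ∏ j ∈ T, x j :=
        sum_congr rfl fun i hi ↦ mul_esymmOn_erase hi k x
    _ = ∑ T ∈ A.powersetCard (k + 1), ∑ _i ∈ T, ∏ j ∈ T, x j := by
        refine sum_comm' fun i T ↦ ?_
        simp only [mem_filter, mem_powersetCard]
        constructor
        · tauto
        · exact fun ⟨hiT, hTA, hT⟩ ↦ ⟨hTA hiT, ⟨hTA, hT⟩, hiT⟩
    _ = (k + 1) * esymmOn A (k + 1) x := by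
        rw [esymmOn, mul_sum]
        refine sum_congr rfl fun T hT ↦ ?_
        rw [sum_const, (mem_powersetCard.1 hT).2, nsmul_eq_mul]
        push_cast
        rfl

end EsymmOn

lemma mul_div_add_add_mul_div_add_le {a b s t u : ℝ} (ha : 0 < a) (hb : 0 < b) (hs : 0 < s)
    (ht : 0 < t) (hu : s + t ≤ u) :
    a * s / (a + s) + b * t / (b + t) ≤ (a + b) * u / (a + b + u) := by
  have hu0 : 0 < u := by linarith
  calc a * s / (a + s) + b * t / (b + t) ≤ (a + b) * (s + t) / (a + b + (s + t)) := by
        rw [div_add_div _ _ (by positivity) (by positivity),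
          div_le_div_iff₀ (by positivity) (by positivity)]
        nlinarith [sq_nonneg (a * t - b * s), mul_pos ha hb, mul_pos hs ht, mul_pos ha ht,
          mul_pos hb hs]
    _ ≤ (a + b) * u / (a + b + u) := by
        rw [div_le_div_iff₀ (by positivity) (by positivity)]
        nlinarith [mul_le_mul_of_nonneg_left hu (mul_pos (add_pos ha hb) (add_pos ha hb)).le]

section EsymmRatio

variable {ι : Type*} {A : Finset ι} {k : ℕ} {x y : ι → ℝ}

noncomputable def esymmRatio (A : Finset ι) (k : ℕ) (x : ι → ℝ) : ℝ :=
  esymmOn A (k + 1) x / esymmOn A k x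

lemma esymmRatio_pos (hx : ∀ i ∈ A, 0 < x i) (hk : k + 1 ≤ #A) : 0 < esymmRatio A k x :=
  div_pos (esymmOn_pos hx hk) (esymmOn_pos hx (by omega))

lemma esymmOn_eq_prod_esymmRatio (hx : ∀ i ∈ A, 0 < x i) (hk : k ≤ #A) :
    esymmOn A k x = ∏ j ∈ range k, esymmRatio A j x := by
  induction k with
  | zero => simp
  | succ k ih =>
    rw [prod_range_succ, ← ih (by omega), esymmRatio,
      mul_div_cancel₀ _ (esymmOn_pos hx (by omega)).ne']

variable [DecidableEq ι]

lemma succ_mul_esymmRatio_succ (hx : ∀ i ∈ A, 0 < x i) (hk : k + 2 ≤ #A) :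
    (k + 2) * esymmRatio A (k + 1) x =
      ∑ i ∈ A, x i * esymmRatio (A.erase i) k x / (x i + esymmRatio (A.erase i) k x) := by
  have hterm : ∀ i ∈ A, x i * esymmRatio (A.erase i) k x / (x i + esymmRatio (A.erase i) k x)
      = x i * esymmOn (A.erase i) (k + 1) x / esymmOn A (k + 1) x := by
    intro i hi
    have hxi : ∀ j ∈ A.erase i, 0 < x j := fun j hj ↦ hx j (mem_of_mem_erase hj)
    have hcard : k + 1 ≤ #(A.erase i) := by rw [card_erase_of_mem hi]; omega
    have := esymmOn_pos hxi hcard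
    have := esymmOn_pos hxi (k := k) (by omega)
    have := hx i hi
    rw [esymmOn_succ_of_mem hi, esymmRatio]
    field_simp
  rw [sum_congr rfl hterm, ← sum_div, sum_mul_esymmOn_erase, esymmRatio]
  push_cast
  ring

theorem esymmRatio_add_le (hx : ∀ i ∈ A, 0 < x i) (hy : ∀ i ∈ A, 0 < y i) (hk : k + 1 ≤ #A) :
    esymmRatio A k x + esymmRatio A k y ≤ esymmRatio A k (x + y) := by
  induction k generalizing A with
  | zero => simp [esymmRatio, esymmOn_one, sum_add_distrib]
  | succ k ih =>
    have hxy : ∀ i ∈ A, 0 < (x + y) i := fun i hi ↦ add_pos (hx i hi) (hy i hi)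
    suffices (k + 2) * (esymmRatio A (k + 1) x + esymmRatio A (k + 1) y) ≤
        (k + 2) * esymmRatio A (k + 1) (x + y) by
      exact le_of_mul_le_mul_left this (by positivity)
    rw [mul_add, succ_mul_esymmRatio_succ hx hk, succ_mul_esymmRatio_succ hy hk,
      succ_mul_esymmRatio_succ hxy hk, ← sum_add_distrib]
    refine sum_le_sum fun i hi ↦ ?_
    have hxi : ∀ j ∈ A.erase i, 0 < x j := fun j hj ↦ hx j (mem_of_mem_erase hj)
    have hyi : ∀ j ∈ A.erase i, 0 < y j := fun j hj ↦ hy j (mem_of_mem_erase hj)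
    have hcard : k + 1 ≤ #(A.erase i) := by rw [card_erase_of_mem hi]; omega
    exact mul_div_add_add_mul_div_add_le (hx i hi) (hy i hi) (esymmRatio_pos hxi hcard)
      (esymmRatio_pos hyi hcard) (ih hxi hyi hcard)

end EsymmRatio

theorem Real.geom_mean_add_geom_mean_le_geom_mean_add {ι : Type*} {T : Finset ι} {u v : ι → ℝ}
    (hT : T.Nonempty) (hu : ∀ i ∈ T, 0 < u i) (hv : ∀ i ∈ T, 0 < v i) :
    (∏ i ∈ T, u i) ^ (#T : ℝ)⁻¹ + (∏ i ∈ T, v i) ^ (#T : ℝ)⁻¹ ≤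
      (∏ i ∈ T, (u i + v i)) ^ (#T : ℝ)⁻¹ := by
  have huv : ∀ i ∈ T, 0 < u i + v i := fun i hi ↦ add_pos (hu i hi) (hv i hi)
  have hW : 0 < (∏ i ∈ T, (u i + v i)) ^ (#T : ℝ)⁻¹ := by
    have := prod_pos huv
    positivity
  -- AM-GM for the fractions `u i / (u i + v i)` and `v i / (u i + v i)`, which add up to `1`.
  have amgm : ∀ z : ι → ℝ, (∀ i ∈ T, 0 ≤ z i) →
      (∏ i ∈ T, z i) ^ (#T : ℝ)⁻¹ ≤ (∑ i ∈ T, z i) / #T := by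
    intro z hz
    simpa using Real.geom_mean_le_arith_mean T (fun _ ↦ 1) z (by simp) (by simpa) hz
  have hsplit : ∀ z : ι → ℝ, (∀ i ∈ T, 0 ≤ z i) → (∏ i ∈ T, z i) ^ (#T : ℝ)⁻¹ =
      (∏ i ∈ T, z i / (u i + v i)) ^ (#T : ℝ)⁻¹ * (∏ i ∈ T, (u i + v i)) ^ (#T : ℝ)⁻¹ := by
    intro z hz
    rw [prod_div_distrib, Real.div_rpow (prod_nonneg hz) (prod_nonneg fun i hi ↦ (huv i hi).le),
      div_mul_cancel₀ _ hW.ne']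
  have hfrac : ∀ i ∈ T, 0 ≤ u i / (u i + v i) ∧ 0 ≤ v i / (u i + v i) := fun i hi ↦
    ⟨div_nonneg (hu i hi).le (huv i hi).le, div_nonneg (hv i hi).le (huv i hi).le⟩
  have hsum : ∑ i ∈ T, (u i / (u i + v i) + v i / (u i + v i)) = #T := by
    rw [sum_congr rfl fun i hi ↦ by rw [← add_div, div_self (huv i hi).ne']]
    simp
  calc (∏ i ∈ T, u i) ^ (#T : ℝ)⁻¹ + (∏ i ∈ T, v i) ^ (#T : ℝ)⁻¹
      = ((∏ i ∈ T, u i / (u i + v i)) ^ (#T : ℝ)⁻¹ + (∏ i ∈ T, v i / (u i + v i)) ^ (#T : ℝ)⁻¹)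
          * (∏ i ∈ T, (u i + v i)) ^ (#T : ℝ)⁻¹ := by
        rw [add_mul, ← hsplit u fun i hi ↦ (hu i hi).le, ← hsplit v fun i hi ↦ (hv i hi).le]
    _ ≤ ((∑ i ∈ T, u i / (u i + v i)) / #T + (∑ i ∈ T, v i / (u i + v i)) / #T)
          * (∏ i ∈ T, (u i + v i)) ^ (#T : ℝ)⁻¹ := by
        gcongr
        · exact amgm _ fun i hi ↦ (hfrac i hi).1
        · exact amgm _ fun i hi ↦ (hfrac i hi).2
    _ = (∏ i ∈ T, (u i + v i)) ^ (#T : ℝ)⁻¹ := by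
        rw [← add_div, ← sum_add_distrib, hsum, div_self (by simpa using hT.card_pos.ne'), one_mul]

theorem Real.perspective_rpow_add_le {p l m a b : ℝ} (hp0 : 0 ≤ p) (hp1 : p ≤ 1) (hl : 0 < l)
    (hm : 0 < m) (hlm : l + m = 1) (ha : 0 ≤ a) (hb : 0 ≤ b) :
    l ^ (1 - p) * a ^ p + m ^ (1 - p) * b ^ p ≤ (a + b) ^ p := by
  have hpersp : ∀ {t c : ℝ}, 0 < c → 0 ≤ t → c ^ (1 - p) * t ^ p = c * (t / c) ^ p := by
    intro t c hc ht
    rw [Real.div_rpow ht hc.le, Real.rpow_sub hc, Real.rpow_one]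
    field_simp
  have hconc := (Real.concaveOn_rpow hp0 hp1).2 (Set.mem_Ici.2 (div_nonneg ha hl.le))
    (Set.mem_Ici.2 (div_nonneg hb hm.le)) hl.le hm.le hlm
  simp only [smul_eq_mul, mul_div_cancel₀ _ hl.ne', mul_div_cancel₀ _ hm.ne'] at hconc
  rwa [hpersp hl ha, hpersp hm hb]

-- The weights of `Real.perspective_rpow_add_le` for which it is an equality at `(a, b)`.
theorem Real.add_rpow_eq_perspective {p a b : ℝ} (ha : 0 < a) (hb : 0 < b) :
    (a + b) ^ p = (a / (a + b)) ^ (1 - p) * a ^ p + (b / (a + b)) ^ (1 - p) * b ^ p := by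
  have hs : 0 < a + b := add_pos ha hb
  have hterm : ∀ t : ℝ, 0 < t → (t / (a + b)) ^ (1 - p) * t ^ p = t / (a + b) * (a + b) ^ p := by
    intro t ht
    rw [Real.div_rpow ht.le hs.le, Real.rpow_sub ht, Real.rpow_sub hs, Real.rpow_one,
      Real.rpow_one]
    field_simp
  rw [hterm a ha, hterm b hb]
  field_simp

section EsymmRoot

variable {ι : Type*} {A : Finset ι} {k : ℕ} {p : ℝ} {x y : ι → ℝ}

lemma esymmOn_const_mul_rpow_inv {c : ℝ} (hc : 0 ≤ c) (hx : ∀ i ∈ A, 0 ≤ x i) (hk : k ≠ 0) :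
    esymmOn A k (fun i ↦ c * x i) ^ (k : ℝ)⁻¹ = c * esymmOn A k x ^ (k : ℝ)⁻¹ := by
  rw [esymmOn_const_mul, Real.mul_rpow (pow_nonneg hc k) (esymmOn_nonneg hx),
    Real.pow_rpow_inv_natCast hc hk]

noncomputable def esymmPowRoot (A : Finset ι) (k : ℕ) (p : ℝ) (x : ι → ℝ) : ℝ :=
  esymmOn A k (fun i ↦ x i ^ p) ^ (1 / (p * k))

lemma esymmPowRoot_smul {c : ℝ} (hc : 0 ≤ c) (hx : ∀ i ∈ A, 0 ≤ x i) (hp : p ≠ 0) (hk : k ≠ 0) :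
    esymmPowRoot A k p (c • x) = c * esymmPowRoot A k p x := by
  have hxp : ∀ i ∈ A, 0 ≤ x i ^ p := fun i hi ↦ Real.rpow_nonneg (hx i hi) p
  rw [esymmPowRoot, esymmPowRoot,
    esymmOn_congr (x := fun i ↦ (c • x) i ^ p) (y := fun i ↦ c ^ p * x i ^ p)
      fun i hi ↦ Real.mul_rpow hc (hx i hi), esymmOn_const_mul,
    Real.mul_rpow (by positivity) (esymmOn_nonneg hxp), ← Real.rpow_natCast, ← Real.rpow_mul hc,
    ← Real.rpow_mul hc, mul_one_div_cancel (by positivity), Real.rpow_one]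

lemma esymmPowRoot_eq_rpow_inv (hx : ∀ i ∈ A, 0 ≤ x i) :
    esymmPowRoot A k p x = (esymmOn A k (fun i ↦ x i ^ p) ^ (k : ℝ)⁻¹) ^ p⁻¹ := by
  rw [esymmPowRoot, ← Real.rpow_mul (esymmOn_nonneg fun i hi ↦ Real.rpow_nonneg (hx i hi) p)]
  congr 1
  field_simp

lemma continuous_esymmPowRoot (A : Finset ι) (k : ℕ) (hp : 0 ≤ p) :
    Continuous (esymmPowRoot A k p) :=
  ((continuous_esymmOn A k).comp
    (continuous_pi fun i ↦ (Real.continuous_rpow_const hp).comp (continuous_apply i))).rpow_const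
    fun _ ↦ Or.inr (by positivity)

variable [DecidableEq ι]

theorem esymmOn_rpow_inv_add_le (hx : ∀ i ∈ A, 0 < x i) (hy : ∀ i ∈ A, 0 < y i) (hk1 : 1 ≤ k)
    (hk : k ≤ #A) :
    esymmOn A k x ^ (k : ℝ)⁻¹ + esymmOn A k y ^ (k : ℝ)⁻¹ ≤ esymmOn A k (x + y) ^ (k : ℝ)⁻¹ := by
  have hxy : ∀ i ∈ A, 0 < (x + y) i := fun i hi ↦ add_pos (hx i hi) (hy i hi)
  have hpos : ∀ z : ι → ℝ, (∀ i ∈ A, 0 < z i) → ∀ j ∈ range k, 0 < esymmRatio A j z :=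
    fun z hz j hj ↦ esymmRatio_pos hz (by rw [mem_range] at hj; omega)
  rw [esymmOn_eq_prod_esymmRatio hx hk, esymmOn_eq_prod_esymmRatio hy hk,
    esymmOn_eq_prod_esymmRatio hxy hk]
  have := Real.geom_mean_add_geom_mean_le_geom_mean_add (nonempty_range_iff.2 (by omega))
    (hpos x hx) (hpos y hy)
  rw [card_range] at this
  refine this.trans (Real.rpow_le_rpow ?_ ?_ (by positivity))
  · exact prod_nonneg fun j hj ↦ (add_pos (hpos x hx j hj) (hpos y hy j hj)).le
  · refine prod_le_prod (fun j hj ↦ (add_pos (hpos x hx j hj) (hpos y hy j hj)).le) fun j hj ↦ ?_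
    exact esymmRatio_add_le hx hy (by rw [mem_range] at hj; omega)

theorem esymmOn_rpow_inv_mul_add_le {c d : ℝ} (hc : 0 < c) (hd : 0 < d) (hx : ∀ i ∈ A, 0 < x i)
    (hy : ∀ i ∈ A, 0 < y i) (hk1 : 1 ≤ k) (hk : k ≤ #A) :
    c * esymmOn A k x ^ (k : ℝ)⁻¹ + d * esymmOn A k y ^ (k : ℝ)⁻¹ ≤
      esymmOn A k (fun i ↦ c * x i + d * y i) ^ (k : ℝ)⁻¹ := by
  rw [← esymmOn_const_mul_rpow_inv hc.le (fun i hi ↦ (hx i hi).le) (by omega),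
    ← esymmOn_const_mul_rpow_inv hd.le (fun i hi ↦ (hy i hi).le) (by omega)]
  exact esymmOn_rpow_inv_add_le (fun i hi ↦ mul_pos hc (hx i hi)) (fun i hi ↦ mul_pos hd (hy i hi))
    hk1 hk

theorem esymmPowRoot_add_le_of_pos (hp0 : 0 < p) (hp1 : p ≤ 1) (hx : ∀ i ∈ A, 0 < x i)
    (hy : ∀ i ∈ A, 0 < y i) (hk1 : 1 ≤ k) (hk : k ≤ #A) :
    esymmPowRoot A k p x + esymmPowRoot A k p y ≤ esymmPowRoot A k p (x + y) := by
  have hxy : ∀ i ∈ A, 0 < (x + y) i := fun i hi ↦ add_pos (hx i hi) (hy i hi)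
  have hpos : ∀ z : ι → ℝ, (∀ i ∈ A, 0 < z i) → 0 < esymmOn A k (fun i ↦ z i ^ p) ^ (k : ℝ)⁻¹ :=
    fun z hz ↦ Real.rpow_pos_of_pos (esymmOn_pos (fun i hi ↦ Real.rpow_pos_of_pos (hz i hi) p) hk) _
  rw [esymmPowRoot_eq_rpow_inv fun i hi ↦ (hx i hi).le,
    esymmPowRoot_eq_rpow_inv fun i hi ↦ (hy i hi).le,
    esymmPowRoot_eq_rpow_inv fun i hi ↦ (hxy i hi).le]
  set α := (esymmOn A k (fun i ↦ x i ^ p) ^ (k : ℝ)⁻¹) ^ p⁻¹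
  set β := (esymmOn A k (fun i ↦ y i ^ p) ^ (k : ℝ)⁻¹) ^ p⁻¹
  have hα : 0 < α := Real.rpow_pos_of_pos (hpos x hx) _
  have hβ : 0 < β := Real.rpow_pos_of_pos (hpos y hy) _
  rw [Real.le_rpow_inv_iff_of_pos (add_pos hα hβ).le (hpos _ hxy).le hp0]
  calc (α + β) ^ p
      = (α / (α + β)) ^ (1 - p) * α ^ p + (β / (α + β)) ^ (1 - p) * β ^ p :=
        Real.add_rpow_eq_perspective hα hβ
    _ ≤ esymmOn A k (fun i ↦ (α / (α + β)) ^ (1 - p) * x i ^ p +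
          (β / (α + β)) ^ (1 - p) * y i ^ p) ^ (k : ℝ)⁻¹ := by
        rw [Real.rpow_inv_rpow (hpos x hx).le hp0.ne', Real.rpow_inv_rpow (hpos y hy).le hp0.ne']
        exact esymmOn_rpow_inv_mul_add_le (by positivity) (by positivity)
          (fun i hi ↦ Real.rpow_pos_of_pos (hx i hi) p)
          (fun i hi ↦ Real.rpow_pos_of_pos (hy i hi) p) hk1 hk
    _ ≤ esymmOn A k (fun i ↦ (x + y) i ^ p) ^ (k : ℝ)⁻¹ := by
        refine Real.rpow_le_rpow (esymmOn_nonneg fun i hi ↦ ?_) (esymmOn_mono (fun i hi ↦ ?_)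
          fun i hi ↦ ?_) (by positivity)
        all_goals have hxi := hx i hi; have hyi := hy i hi
        · positivity
        · positivity
        · exact Real.perspective_rpow_add_le hp0.le hp1 (by positivity) (by positivity)
            (by field_simp) hxi.le hyi.le

end EsymmRoot

theorem Continuous.add_le_of_forall_pos {ι : Type*} {f : (ι → ℝ) → ℝ} (hf : Continuous f)
    (hpos : ∀ x y : ι → ℝ, (∀ i, 0 < x i) → (∀ i, 0 < y i) → f x + f y ≤ f (x + y))
    {x y : ι → ℝ} (hx : ∀ i, 0 ≤ x i) (hy : ∀ i, 0 ≤ y i) : f x + f y ≤ f (x + y) := by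
  have hshift : ∀ z : ι → ℝ, Filter.Tendsto (fun ε : ℝ ↦ z + ε • 1) (nhdsWithin 0 (Set.Ioi 0))
      (nhds z) := fun z ↦
    ((continuous_const.add (continuous_id.smul continuous_const)).tendsto' 0 z
      (by simp)).mono_left nhdsWithin_le_nhds
  refine le_of_tendsto_of_tendsto (((hf.tendsto x).comp (hshift x)).add
    ((hf.tendsto y).comp (hshift y))) ((hf.tendsto (x + y)).comp ((hshift x).add (hshift y)))
    (eventually_nhdsWithin_of_forall fun ε (hε : 0 < ε) ↦ hpos _ _ (fun i ↦ ?_) fun i ↦ ?_)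
  · simpa using add_pos_of_nonneg_of_pos (hx i) hε
  · simpa using add_pos_of_nonneg_of_pos (hy i) hε

theorem concaveOn_of_add_le_of_smul_eq {E : Type*} [AddCommMonoid E] [Module ℝ E] {s : Set E}
    {f : E → ℝ} (hs : Convex ℝ s) (hsmul : ∀ x ∈ s, ∀ c : ℝ, 0 ≤ c → c • x ∈ s)
    (hhom : ∀ x ∈ s, ∀ c : ℝ, 0 ≤ c → f (c • x) = c * f x)
    (hadd : ∀ x ∈ s, ∀ y ∈ s, f x + f y ≤ f (x + y)) : ConcaveOn ℝ s f := by
  refine ⟨hs, fun x hx y hy a b ha hb _ ↦ ?_⟩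
  rw [smul_eq_mul, smul_eq_mul, ← hhom x hx a ha, ← hhom y hy b hb]
  exact hadd _ (hsmul x hx a ha) _ (hsmul y hy b hb)

/-- Let `1 ≤ k ≤ n` and `p ∈ (0, 1)`. The function
`x ↦ (e_k(x^p))^(1/(pk))` is concave on the nonnegative orthant; equivalently, for all
nonnegative `x, y`, `(e_k((x+y)^p))^(1/(pk)) ≥ (e_k(x^p))^(1/(pk)) + (e_k(y^p))^(1/(pk))`. -/
theorem esymm_rpow_concave (n k : ℕ) (hk1 : 1 ≤ k) (hkn : k ≤ n)
    (p : ℝ) (hp : p ∈ Set.Ioo (0 : ℝ) 1) :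
    ConcaveOn ℝ {x : Fin n → ℝ | ∀ i, 0 ≤ x i}
      (fun x => (esymm n k (fun i => x i ^ p)) ^ (1 / (p * k))) ∧
    ∀ x y : Fin n → ℝ, (∀ i, 0 ≤ x i) → (∀ i, 0 ≤ y i) →
      (esymm n k (fun i => x i ^ p)) ^ (1 / (p * k)) +
        (esymm n k (fun i => y i ^ p)) ^ (1 / (p * k)) ≤
      (esymm n k (fun i => (x i + y i) ^ p)) ^ (1 / (p * k)) := by
  obtain ⟨hp0, hp1⟩ := hp
  have hcard : k ≤ #(univ : Finset (Fin n)) := by simpa using hkn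
  have hadd : ∀ x y : Fin n → ℝ, (∀ i, 0 ≤ x i) → (∀ i, 0 ≤ y i) →
      esymmPowRoot univ k p x + esymmPowRoot univ k p y ≤ esymmPowRoot univ k p (x + y) :=
    fun x y ↦ (continuous_esymmPowRoot univ k hp0.le).add_le_of_forall_pos fun x y hx hy ↦
      esymmPowRoot_add_le_of_pos hp0 hp1.le (fun i _ ↦ hx i) (fun i _ ↦ hy i) hk1 hcard
  refine ⟨concaveOn_of_add_le_of_smul_eq (convex_Ici 0) (fun x hx c hc i ↦ mul_nonneg hc (hx i))
    (fun x hx c hc ↦ esymmPowRoot_smul hc (fun i _ ↦ hx i) hp0.ne' (by omega))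
    fun x hx y hy ↦ hadd x y hx hy, hadd⟩
end

section
/- Let ξ₁, …, ξₙ be independent standard exponential random variables (rate 1). Then for any integer k ≥ 0 and any x ∈ ℝ₊ⁿ, (1/k!) · E[(ξ₁x₁ + ⋯ + ξₙxₙ)^k] = h_k(x), where h_k is the k-th complete homogeneous symmetric polynomial. -/
open MeasureTheory ProbabilityTheory

/-- The `k`-th complete homogeneous symmetric polynomial of `x ∈ ℝⁿ`:
the sum of all monomials `x_{i₁} x_{i₂} ⋯ x_{i_k}` with `1 ≤ i₁ ≤ ⋯ ≤ i_k ≤ n`. -/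
noncomputable def hsymm (n k : ℕ) (x : Fin n → ℝ) : ℝ :=
  ∑ m ∈ (Finset.univ : Finset (Fin n)).sym k, (m.1.map x).prod

/-!
Expand `(∑ ξᵢ xᵢ)^k` by the multinomial theorem. By independence the expectation of each
monomial `∏ (ξᵢ xᵢ)^{fᵢ}` factors as `∏ fᵢ! xᵢ^{fᵢ}`, since the `j`-th moment of a standard
exponential variable is `Γ(j + 1) = j!`. The factorials cancel the multinomial coefficient
`k! / ∏ fᵢ!` up to the common factor `k!`, and the remaining sum over exponent vectors `f` with
`∑ fᵢ = k` is `h_k(x)`.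
-/

open Real Set
open scoped Nat

namespace ProbabilityTheory

section ExponentialMoments

variable {r : ℝ}

lemma expMeasure_eq_withDensity (r : ℝ) :
    expMeasure r = volume.withDensity (exponentialPDF r) := rfl

lemma measurable_exponentialPDF (r : ℝ) : Measurable (exponentialPDF r) :=
  (measurable_exponentialPDFReal r).ennreal_ofReal

lemma toReal_exponentialPDF_smul_pow (hr : 0 < r) (j : ℕ) :
    (fun t ↦ (exponentialPDF r t).toReal • t ^ j) =
      (Ici 0).indicator (fun t ↦ r * (t ^ j * exp (-(r * t)))) := by
  ext t
  by_cases ht : 0 ≤ t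
  · rw [exponentialPDF_of_nonneg ht, ENNReal.toReal_ofReal (by positivity),
      indicator_of_mem (mem_Ici.2 ht), smul_eq_mul]
    ring
  · simp [exponentialPDF_of_neg (not_le.mp ht), ht]

lemma integrable_pow_expMeasure (hr : 0 < r) (j : ℕ) :
    Integrable (fun t ↦ t ^ j) (expMeasure r) := by
  rw [expMeasure_eq_withDensity, integrable_withDensity_iff_integrable_smul'
    (measurable_exponentialPDF r) (ae_of_all _ fun _ ↦ ENNReal.ofReal_lt_top),
    toReal_exponentialPDF_smul_pow hr, integrable_indicator_iff measurableSet_Ici,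
    integrableOn_Ici_iff_integrableOn_Ioi]
  have h := integrableOn_rpow_mul_exp_neg_mul_rpow (s := j) (p := 1)
    (neg_one_lt_zero.trans_le j.cast_nonneg) one_pos hr
  refine (h.congr_fun (fun t _ ↦ ?_) measurableSet_Ioi).const_mul r
  simp [rpow_natCast]

lemma integral_pow_expMeasure (hr : 0 < r) (j : ℕ) :
    ∫ t, t ^ j ∂expMeasure r = j ! / r ^ j := by
  rw [expMeasure_eq_withDensity, integral_withDensity_eq_integral_toReal_smul
    (measurable_exponentialPDF r) (ae_of_all _ fun _ ↦ ENNReal.ofReal_lt_top),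
    toReal_exponentialPDF_smul_pow hr, integral_indicator measurableSet_Ici,
    integral_Ici_eq_integral_Ioi, integral_const_mul]
  have h := integral_rpow_mul_exp_neg_mul_Ioi (a := j + 1) (by positivity) hr
  simp only [add_sub_cancel_right, rpow_natCast, Gamma_nat_eq_factorial] at h
  rw [h, ← Nat.cast_add_one, rpow_natCast, one_div, inv_pow, pow_succ]
  field_simp

variable {Ω : Type*} {mΩ : MeasurableSpace Ω} {μ : Measure Ω} {X : Ω → ℝ}

lemma HasLaw.integrable_pow_expMeasure (hX : HasLaw X (expMeasure r) μ) (hr : 0 < r) (j : ℕ) :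
    Integrable (fun ω ↦ X ω ^ j) μ := by
  have h := ProbabilityTheory.integrable_pow_expMeasure hr j
  rw [← hX.map_eq] at h
  exact (integrable_map_measure h.aestronglyMeasurable hX.aemeasurable).mp h

lemma HasLaw.integral_pow_expMeasure (hX : HasLaw X (expMeasure r) μ) (hr : 0 < r) (j : ℕ) :
    ∫ ω, X ω ^ j ∂μ = j ! / r ^ j :=
  (hX.integral_comp (f := fun t ↦ t ^ j) (by fun_prop)).trans
    (ProbabilityTheory.integral_pow_expMeasure hr j)

end ExponentialMoments

section IndependentMoments

variable {Ω ι : Type*} {mΩ : MeasurableSpace Ω} {μ : Measure Ω} {X : ι → Ω → ℝ}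

lemma iIndepFun.integrable_finsetProd (hX : iIndepFun X μ) (hmeas : ∀ i, Measurable (X i))
    {s : Finset ι} (hint : ∀ i ∈ s, Integrable (X i) μ) :
    Integrable (fun ω ↦ ∏ i ∈ s, X i ω) μ := by
  classical
  have := hX.isProbabilityMeasure
  induction s using Finset.induction_on with
  | empty => simp
  | insert a s ha ih =>
    simp only [Finset.prod_insert ha]
    have hind : IndepFun (X a) (fun ω ↦ ∏ i ∈ s, X i ω) μ := by
      simpa only [Finset.prod_fn] using (hX.indepFun_finsetProd_of_notMem hmeas ha).symm
    exact hind.integrable_mul (hint a (s.mem_insert_self a))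
      (ih fun i hi ↦ hint i (Finset.mem_insert_of_mem hi))

lemma iIndepFun.integral_sum_pow [Fintype ι] [DecidableEq ι] (hX : iIndepFun X μ)
    (hmeas : ∀ i, Measurable (X i)) (hint : ∀ i j, Integrable (fun ω ↦ X i ω ^ j) μ) (k : ℕ) :
    ∫ ω, (∑ i, X i ω) ^ k ∂μ =
      ∑ f ∈ Finset.piAntidiag Finset.univ k,
        Nat.multinomial Finset.univ f * ∏ i, ∫ ω, X i ω ^ f i ∂μ := by
  have hpow (f : ι → ℕ) : iIndepFun (fun i ω ↦ X i ω ^ f i) μ :=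
    hX.comp (fun i t ↦ t ^ f i) (fun i ↦ measurable_id.pow_const (f i))
  simp_rw [Finset.sum_pow_eq_sum_piAntidiag]
  rw [integral_finsetSum _ fun f _ ↦ ((hpow f).integrable_finsetProd
    (fun i ↦ (hmeas i).pow_const (f i)) fun i _ ↦ hint i (f i)).const_mul _]
  refine Finset.sum_congr rfl fun f _ ↦ ?_
  rw [integral_const_mul, hX.integral_fun_prod_comp (f := fun i t ↦ t ^ f i)
    (fun i ↦ (hmeas i).aemeasurable) (fun i ↦ by fun_prop)]

end IndependentMoments

end ProbabilityTheory

lemma hsymm_eq_sum_piAntidiag (n k : ℕ) (x : Fin n → ℝ) :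
    hsymm n k x = ∑ f ∈ Finset.piAntidiag Finset.univ k, ∏ i, x i ^ f i := by
  rw [← Finset.map_sym_eq_piAntidiag, Finset.sum_map, hsymm]
  refine Finset.sum_congr rfl fun m _ ↦ ?_
  rw [Finset.prod_multiset_map_count]
  refine Finset.prod_subset (Finset.subset_univ _) fun i _ hi ↦ ?_
  rw [Multiset.count_eq_zero.mpr (by simpa using hi), pow_zero]

theorem hsymm_expectation_exponential_general {Ω : Type*} [MeasurableSpace Ω]
    (μ : Measure Ω) [IsProbabilityMeasure μ] (n : ℕ) (ξ : Fin n → Ω → ℝ)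
    (hmeas : ∀ i, Measurable (ξ i))
    (hindep : iIndepFun ξ μ)
    (hdist : ∀ i, μ.map (ξ i) = expMeasure 1)
    (k : ℕ) (x : Fin n → ℝ) :
    (1 / (Nat.factorial k : ℝ)) * ∫ ω, (∑ i, ξ i ω * x i) ^ k ∂μ = hsymm n k x := by
  have hlaw (i : Fin n) : HasLaw (ξ i) (expMeasure 1) μ := ⟨(hmeas i).aemeasurable, hdist i⟩
  have hmoment (i : Fin n) (j : ℕ) : ∫ ω, (ξ i ω * x i) ^ j ∂μ = j ! * x i ^ j := by
    simp_rw [mul_pow]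
    rw [integral_mul_const, (hlaw i).integral_pow_expMeasure one_pos, one_pow, div_one]
  have hindep_scaled : iIndepFun (fun i ω ↦ ξ i ω * x i) μ :=
    hindep.comp (fun i t ↦ t * x i) (fun i ↦ measurable_mul_const (x i))
  rw [hindep_scaled.integral_sum_pow (fun i ↦ (hmeas i).mul_const (x i)) (fun i j ↦ by
      simpa only [mul_pow] using ((hlaw i).integrable_pow_expMeasure one_pos j).mul_const _),
    hsymm_eq_sum_piAntidiag, Finset.mul_sum]
  refine Finset.sum_congr rfl fun f hf ↦ ?_
  have hspec : (Nat.multinomial Finset.univ f * ∏ i, ((f i)! : ℝ)) = k ! := by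
    rw [← (Finset.mem_piAntidiag.mp hf).1]
    exact_mod_cast (mul_comm _ _).trans (Nat.multinomial_spec _ _)
  simp only [hmoment, Finset.prod_mul_distrib]
  rw [← mul_assoc (Nat.multinomial _ _ : ℝ), hspec]
  field_simp

/-- If `ξ₁, …, ξₙ` are independent standard exponential random variables,
then for any integer `k ≥ 0` and any `x ∈ ℝ₊ⁿ`,
`(1/k!) ⬝ E[(ξ₁x₁ + ⋯ + ξₙxₙ)^k] = h_k(x)`. -/
theorem hsymm_expectation_exponential {Ω : Type*} [MeasurableSpace Ω]
    (μ : Measure Ω) [IsProbabilityMeasure μ] (n : ℕ) (ξ : Fin n → Ω → ℝ)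
    (hmeas : ∀ i, Measurable (ξ i))
    (hindep : iIndepFun ξ μ)
    (hdist : ∀ i, μ.map (ξ i) = expMeasure 1)
    (k : ℕ) (x : Fin n → ℝ) (hx : ∀ i, 0 ≤ x i) :
    (1 / (Nat.factorial k : ℝ)) * ∫ ω, (∑ i, ξ i ω * x i) ^ k ∂μ = hsymm n k x :=
  hsymm_expectation_exponential_general μ n ξ hmeas hindep hdist k x
end

section
/- Let x, y ∈ ℝ₊ⁿ, let k ≥ 1 be an integer, and let p ≥ 1. Then (h_k((x+y)^p))^(1/(kp)) ≤ (h_k(x^p))^(1/(kp)) + (h_k(y^p))^(1/(kp)). -/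
open MeasureTheory ProbabilityTheory Finset ENNReal
open scoped Nat

theorem lintegral_ofReal_pow_expMeasure_one (m : ℕ) :
    ∫⁻ t, ENNReal.ofReal t ^ m ∂expMeasure 1 = m ! := by
  have hpdf (t : ℝ) : gammaPDF 1 1 t * ENNReal.ofReal t ^ m = m ! * gammaPDF (m + 1) 1 t := by
    rcases lt_or_ge t 0 with ht | ht
    · simp [gammaPDF_of_neg ht]
    rw [gammaPDF_of_nonneg ht, gammaPDF_of_nonneg ht, ← ofReal_pow ht,
      ← ofReal_mul (by positivity), ← ofReal_natCast, ← ofReal_mul (by positivity),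
      Real.Gamma_nat_eq_factorial]
    congr 1
    simp only [Real.one_rpow, Real.Gamma_one, add_sub_cancel_right, sub_self, Real.rpow_zero,
      Real.rpow_natCast]
    field_simp
  rw [expMeasure, gammaMeasure, lintegral_withDensity_eq_lintegral_mul (f := gammaPDF 1 1) _
    (measurable_gammaPDFReal 1 1).ennreal_ofReal (by fun_prop)]
  simp only [Pi.mul_apply, hpdf]
  rw [lintegral_const_mul (f := gammaPDF _ 1) _ (measurable_gammaPDFReal _ _).ennreal_ofReal,
    lintegral_gammaPDF_eq_one (by positivity) one_pos, mul_one]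

instance : IsProbabilityMeasure (expMeasure 1) := isProbabilityMeasure_expMeasure one_pos

section
variable {ι : Type*} [Fintype ι]

theorem lintegral_prod_ofReal_pow_pi_expMeasure (e : ι → ℕ) :
    ∫⁻ ω, ∏ i, ENNReal.ofReal (ω i) ^ e i ∂Measure.pi (fun _ ↦ expMeasure 1) =
      ∏ i, ((e i)! : ℝ≥0∞) := by
  rw [lintegral_prod_eq_prod_lintegral_of_indepFun _
    (fun i (ω : ι → ℝ) ↦ ENNReal.ofReal (ω i) ^ e i)
    (iIndepFun_pi (X := fun i t ↦ ENNReal.ofReal t ^ e i)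
      fun i ↦ (measurable_id.ennreal_ofReal.pow_const (e i)).aemeasurable)
    fun i ↦ ((measurable_pi_apply i).ennreal_ofReal.pow_const _)]
  refine prod_congr rfl fun i _ ↦ ?_
  rw [← lintegral_ofReal_pow_expMeasure_one]
  exact (measurePreserving_eval (fun _ : ι ↦ expMeasure 1) i).lintegral_comp
    (f := fun t : ℝ ↦ ENNReal.ofReal t ^ e i) (by fun_prop)

theorem Multiset.countPerms_mul_prod_factorial_count [DecidableEq ι] (m : Multiset ι) :
    m.countPerms * ∏ i, (m.count i)! = (Multiset.card m)! := by
  rw [Multiset.countPerms, Finsupp.multinomial_eq_of_support_subset (subset_univ _), mul_comm]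
  simpa using Nat.multinomial_spec univ m.toFinsupp

theorem Multiset.prod_map_eq_prod_pow_count [DecidableEq ι] {M : Type*} [CommMonoid M]
    (m : Multiset ι) (f : ι → M) : (m.map f).prod = ∏ i, f i ^ m.count i := by
  rw [Multiset.prod_map_eq_finprod, finprod_eq_prod_of_fintype]

theorem lintegral_sum_mul_ofReal_pow_pi_expMeasure [DecidableEq ι] (z : ι → ℝ≥0∞) (k : ℕ) :
    ∫⁻ ω, (∑ i, z i * ENNReal.ofReal (ω i)) ^ k ∂Measure.pi (fun _ ↦ expMeasure 1) =
      k ! * ∑ m ∈ univ.sym k, (m.1.map z).prod := by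
  have hmeas (e : ι → ℕ) : Measurable fun ω : ι → ℝ ↦ ∏ i, ENNReal.ofReal (ω i) ^ e i := by
    fun_prop
  have expand (ω : ι → ℝ) : (∑ i, z i * ENNReal.ofReal (ω i)) ^ k = ∑ m ∈ univ.sym k,
      m.1.countPerms * (m.1.map z).prod * ∏ i, ENNReal.ofReal (ω i) ^ m.1.count i := by
    refine (sum_pow _ _).trans (sum_congr rfl fun m _ ↦ ?_)
    rw [Multiset.prod_map_mul, Multiset.prod_map_eq_prod_pow_count m.1 (fun i ↦ ENNReal.ofReal _),
      mul_assoc]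
  simp_rw [expand, mul_sum]
  rw [lintegral_finsetSum _ fun m _ ↦ (hmeas _).const_mul _]
  refine sum_congr rfl fun m _ ↦ ?_
  rw [lintegral_const_mul _ (hmeas _), lintegral_prod_ofReal_pow_pi_expMeasure, mul_right_comm]
  congr 1
  exact_mod_cast m.card_coe ▸ m.1.countPerms_mul_prod_factorial_count

noncomputable def weightedLpNorm (p : ℝ) (a w : ι → ℝ≥0∞) : ℝ≥0∞ :=
  (∑ i, a i ^ p * w i) ^ (1 / p)

theorem weightedLpNorm_add_le {p : ℝ} (hp : 1 ≤ p) (a b w : ι → ℝ≥0∞) :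
    weightedLpNorm p (a + b) w ≤ weightedLpNorm p a w + weightedLpNorm p b w := by
  have hp₀ : 0 < p := zero_lt_one.trans_le hp
  have hweight (c : ℝ≥0∞) (i : ι) : (c * w i ^ (1 / p)) ^ p = c ^ p * w i := by
    rw [mul_rpow_of_nonneg _ _ hp₀.le, ← rpow_mul, one_div_mul_cancel hp₀.ne', rpow_one]
  have := Lp_add_le univ (fun i ↦ a i * w i ^ (1 / p)) (fun i ↦ b i * w i ^ (1 / p)) hp
  simpa only [← add_mul, hweight, weightedLpNorm, Pi.add_apply] using this

theorem measurable_weightedLpNorm (p : ℝ) (a : ι → ℝ≥0∞) :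
    Measurable fun ω : ι → ℝ ↦ weightedLpNorm p a fun i ↦ ENNReal.ofReal (ω i) := by
  unfold weightedLpNorm
  fun_prop

theorem lintegral_weightedLpNorm_rpow_pi_expMeasure [DecidableEq ι] {p : ℝ} (hp : 0 < p)
    (a : ι → ℝ≥0∞) (k : ℕ) :
    ∫⁻ ω, weightedLpNorm p a (fun i ↦ ENNReal.ofReal (ω i)) ^ (k * p)
        ∂Measure.pi (fun _ ↦ expMeasure 1) =
      k ! * ∑ m ∈ univ.sym k, (m.1.map (a · ^ p)).prod := by
  have hpow (S : ℝ≥0∞) : (S ^ (1 / p)) ^ (k * p) = S ^ k := by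
    rw [← rpow_mul, one_div_mul_eq_div, mul_div_cancel_right₀ _ hp.ne', rpow_natCast]
  simp only [weightedLpNorm, hpow, lintegral_sum_mul_ofReal_pow_pi_expMeasure]

end

theorem ofReal_hsymm {n : ℕ} (k : ℕ) {z : Fin n → ℝ} (hz : ∀ i, 0 ≤ z i) :
    ENNReal.ofReal (hsymm n k z) =
      ∑ m ∈ univ.sym k, (m.1.map fun i ↦ ENNReal.ofReal (z i)).prod := by
  rw [hsymm, ofReal_sum_of_nonneg fun m _ ↦ Multiset.prod_nonneg fun _ h ↦ ?_]
  · refine sum_congr rfl fun m _ ↦ ?_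
    simp only [Multiset.prod_map_eq_prod_pow_count, ← ofReal_pow (hz _)]
    exact ofReal_prod_of_nonneg fun i _ ↦ pow_nonneg (hz i) _
  · obtain ⟨i, -, rfl⟩ := Multiset.mem_map.1 h
    exact hz i

theorem hsymm_nonneg {n : ℕ} (k : ℕ) {z : Fin n → ℝ} (hz : ∀ i, 0 ≤ z i) : 0 ≤ hsymm n k z :=
  sum_nonneg fun m _ ↦ Multiset.prod_nonneg fun _ h ↦ by
    obtain ⟨i, -, rfl⟩ := Multiset.mem_map.1 h
    exact hz i

theorem factorial_rpow_mul_ofReal_hsymm_rpow {n : ℕ} (k : ℕ) {x : Fin n → ℝ} (hx : ∀ i, 0 ≤ x i)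
    {p : ℝ} (hp : 0 < p) :
    (k ! : ℝ≥0∞) ^ (1 / (k * p)) * ENNReal.ofReal ((hsymm n k fun i ↦ x i ^ p) ^ (1 / (k * p))) =
      (∫⁻ ω, weightedLpNorm p (fun i ↦ ENNReal.ofReal (x i)) (fun i ↦ ENNReal.ofReal (ω i))
        ^ (k * p) ∂Measure.pi (fun _ ↦ expMeasure 1)) ^ (1 / (k * p)) := by
  have hq : 0 ≤ 1 / (k * p) := by positivity
  rw [← ofReal_rpow_of_nonneg (hsymm_nonneg k fun i ↦ Real.rpow_nonneg (hx i) p) hq,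
    ← mul_rpow_of_nonneg _ _ hq, lintegral_weightedLpNorm_rpow_pi_expMeasure hp,
    ofReal_hsymm k fun i ↦ Real.rpow_nonneg (hx i) p]
  simp only [ofReal_rpow_of_nonneg (hx _) hp.le]

/-- Let `x, y ∈ ℝ₊ⁿ`, `k ≥ 1` an integer and `p ≥ 1`. Then
`(h_k((x+y)^p))^(1/(kp)) ≤ (h_k(x^p))^(1/(kp)) + (h_k(y^p))^(1/(kp))`. -/
theorem hsymm_rpow_subadditive (n : ℕ) (x y : Fin n → ℝ)
    (hx : ∀ i, 0 ≤ x i) (hy : ∀ i, 0 ≤ y i) (k : ℕ) (hk : 1 ≤ k) (p : ℝ) (hp : 1 ≤ p) :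
    (hsymm n k (fun i => (x i + y i) ^ p)) ^ (1 / ((k : ℝ) * p)) ≤
      (hsymm n k (fun i => x i ^ p)) ^ (1 / ((k : ℝ) * p)) +
      (hsymm n k (fun i => y i ^ p)) ^ (1 / ((k : ℝ) * p)) := by
  have hp₀ : 0 < p := zero_lt_one.trans_le hp
  have hq : 1 ≤ (k : ℝ) * p := one_le_mul_of_one_le_of_one_le (by exact_mod_cast hk) hp
  have hroot_nonneg {z : Fin n → ℝ} (hz : ∀ i, 0 ≤ z i) :
      0 ≤ (hsymm n k fun i ↦ z i ^ p) ^ (1 / ((k : ℝ) * p)) :=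
    Real.rpow_nonneg (hsymm_nonneg k fun i ↦ Real.rpow_nonneg (hz i) p) _
  have hc : (k ! : ℝ≥0∞) ^ (1 / ((k : ℝ) * p)) ≠ 0 :=
    (ENNReal.rpow_pos (by positivity) (natCast_ne_top _)).ne'
  have hc' : (k ! : ℝ≥0∞) ^ (1 / ((k : ℝ) * p)) ≠ ⊤ :=
    rpow_ne_top_of_nonneg (by positivity) (natCast_ne_top _)
  rw [← ofReal_le_ofReal_iff (add_nonneg (hroot_nonneg hx) (hroot_nonneg hy)),
    ofReal_add (hroot_nonneg hx) (hroot_nonneg hy), ← ENNReal.mul_le_mul_iff_right hc hc', mul_add,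
    factorial_rpow_mul_ofReal_hsymm_rpow k (x := fun i ↦ x i + y i)
      (fun i ↦ add_nonneg (hx i) (hy i)) hp₀,
    factorial_rpow_mul_ofReal_hsymm_rpow k hx hp₀, factorial_rpow_mul_ofReal_hsymm_rpow k hy hp₀]
  refine le_trans ?_ (lintegral_Lp_add_le (measurable_weightedLpNorm _ _).aemeasurable
    (measurable_weightedLpNorm _ _).aemeasurable hq)
  gcongr with ω
  simp only [Pi.add_apply, ofReal_add (hx _) (hy _)]
  exact weightedLpNorm_add_le hp _ _ _
end

section
/- Let a, b, c, d ≥ 0 (with the denominators positive), p ≥ 1, and let k ≥ 2 be an integer. Then (((a^p + b^p)^k + (c^p + d^p)^k) / ((a+b)^p + (c+d)^p))^(1/(p(k-1))) ≤ ((a^(pk) + c^(pk)) / (a^p + c^p))^(1/(p(k-1))) + ((b^(pk) + d^(pk)) / (b^p + d^p))^(1/(p(k-1))). -/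
/-! With `x = (a^p, c^p)` and `y = (b^p, d^p)`, superadditivity of `t ↦ t^p` lets us shrink the
left-hand denominator to `∑ (x + y)`; the left side is then at most the `(1/p)`-th power of the
left side of Dresher's inequality for `x`, `y` and `K = k`, and subadditivity of `t ↦ t^(1/p)`
splits the result. Dresher's inequality itself is Minkowski's inequality in `ℓ^K` followed by
Radon's inequality with exponent `K / (K - 1)`. -/

open Real Finset

namespace Real

variable {ι : Type*}

theorem rpow_sum_div_rpow_sum_le_sum_rpow_div_rpow (s : Finset ι) {q : ℝ} (hq : 1 ≤ q)
    {b X : ι → ℝ} (hb : ∀ i, 0 ≤ b i) (hX : ∀ i, 0 < X i) :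
    (∑ i ∈ s, b i) ^ q / (∑ i ∈ s, X i) ^ (q - 1) ≤ ∑ i ∈ s, b i ^ q / X i ^ (q - 1) := by
  have hq0 : 0 < q := by linarith
  have hterm : ∀ i, X i * (b i / X i) ^ q = b i ^ q / X i ^ (q - 1) := fun i ↦ by
    rw [div_rpow (hb i) (hX i).le, rpow_sub_one (hX i).ne']
    field_simp
  have holder := inner_le_weight_mul_Lp_of_nonneg s hq X (fun i ↦ b i / X i)
    (fun i ↦ (hX i).le) (fun i ↦ div_nonneg (hb i) (hX i).le)
  simp only [mul_div_cancel₀ _ (hX _).ne', hterm] at holder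
  have hXs : 0 ≤ ∑ i ∈ s, X i := sum_nonneg fun i _ ↦ (hX i).le
  have hRs : 0 ≤ ∑ i ∈ s, b i ^ q / X i ^ (q - 1) := sum_nonneg fun i _ ↦ by
    have := hX i; have := hb i; positivity
  refine div_le_of_le_mul₀ (by positivity) hRs ?_
  calc (∑ i ∈ s, b i) ^ q
      ≤ ((∑ i ∈ s, X i) ^ (1 - q⁻¹) * (∑ i ∈ s, b i ^ q / X i ^ (q - 1)) ^ q⁻¹) ^ q :=
        rpow_le_rpow (sum_nonneg fun i _ ↦ hb i) holder hq0.le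
    _ = (∑ i ∈ s, b i ^ q / X i ^ (q - 1)) * (∑ i ∈ s, X i) ^ (q - 1) := by
        rw [mul_rpow (by positivity) (by positivity), ← rpow_mul hXs, ← rpow_mul hRs,
          inv_mul_cancel₀ hq0.ne', rpow_one, sub_mul, inv_mul_cancel₀ hq0.ne', one_mul, mul_comm]

theorem dresher_inequality (s : Finset ι) {K : ℝ} (hK : 1 < K) {f g : ι → ℝ}
    (hf : ∀ i ∈ s, 0 ≤ f i) (hg : ∀ i ∈ s, 0 ≤ g i)
    (hfs : 0 < ∑ i ∈ s, f i) (hgs : 0 < ∑ i ∈ s, g i) :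
    ((∑ i ∈ s, (f i + g i) ^ K) / ∑ i ∈ s, (f i + g i)) ^ (1 / (K - 1)) ≤
      ((∑ i ∈ s, f i ^ K) / ∑ i ∈ s, f i) ^ (1 / (K - 1)) +
      ((∑ i ∈ s, g i ^ K) / ∑ i ∈ s, g i) ^ (1 / (K - 1)) := by
  have hK0 : 0 < K := by linarith
  have hK1 : 0 < K - 1 := by linarith
  have hq : 1 ≤ K / (K - 1) := by rw [le_div_iff₀ hK1]; linarith
  have hq1 : K / (K - 1) - 1 = 1 / (K - 1) := by field_simp; ring
  have hKq : 1 / K * (K / (K - 1)) = 1 / (K - 1) := by field_simp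
  have hSf : 0 ≤ ∑ i ∈ s, f i ^ K := sum_nonneg fun i hi ↦ rpow_nonneg (hf i hi) K
  have hSg : 0 ≤ ∑ i ∈ s, g i ^ K := sum_nonneg fun i hi ↦ rpow_nonneg (hg i hi) K
  have hSfg : 0 ≤ ∑ i ∈ s, (f i + g i) ^ K :=
    sum_nonneg fun i hi ↦ rpow_nonneg (add_nonneg (hf i hi) (hg i hi)) K
  have hpow : ∀ {S : ℝ}, 0 ≤ S → (S ^ (1 / K)) ^ (K / (K - 1)) = S ^ (1 / (K - 1)) :=
    fun hS ↦ by rw [← rpow_mul hS, hKq]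
  have minkowski := Lp_add_le_of_nonneg s hK.le hf hg
  have radon := rpow_sum_div_rpow_sum_le_sum_rpow_div_rpow univ hq
    (b := ![(∑ i ∈ s, f i ^ K) ^ (1 / K), (∑ i ∈ s, g i ^ K) ^ (1 / K)])
    (X := ![∑ i ∈ s, f i, ∑ i ∈ s, g i])
    (by simp [Fin.forall_fin_two, rpow_nonneg hSf, rpow_nonneg hSg])
    (by simp [Fin.forall_fin_two, hfs, hgs])
  simp only [Fin.sum_univ_two, Matrix.cons_val_zero, Matrix.cons_val_one, hq1, hpow hSf,
    hpow hSg] at radon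
  rw [sum_add_distrib, div_rpow hSfg (by positivity), div_rpow hSf hfs.le, div_rpow hSg hgs.le]
  refine le_trans ?_ radon
  gcongr
  rw [← hpow hSfg]
  gcongr

end Real

theorem dresher_style_inequality_general (a b c d : ℝ)
    (ha : 0 ≤ a) (hb : 0 ≤ b) (hc : 0 ≤ c) (hd : 0 ≤ d)
    (p : ℝ) (hp : 1 ≤ p) (k : ℕ) (hk : 2 ≤ k)
    (h1 : 0 < a ^ p + c ^ p) (h2 : 0 < b ^ p + d ^ p) :
    (((a ^ p + b ^ p) ^ k + (c ^ p + d ^ p) ^ k) /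
        ((a + b) ^ p + (c + d) ^ p)) ^ (1 / (p * ((k : ℝ) - 1))) ≤
      ((a ^ (p * (k : ℝ)) + c ^ (p * (k : ℝ))) /
          (a ^ p + c ^ p)) ^ (1 / (p * ((k : ℝ) - 1))) +
      ((b ^ (p * (k : ℝ)) + d ^ (p * (k : ℝ))) /
          (b ^ p + d ^ p)) ^ (1 / (p * ((k : ℝ) - 1))) := by
  have hk1 : (1 : ℝ) < k := by exact_mod_cast hk
  have dresher := Real.dresher_inequality univ hk1 (f := ![a ^ p, c ^ p]) (g := ![b ^ p, d ^ p])
    (by simp [Fin.forall_fin_two, rpow_nonneg, ha, hc])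
    (by simp [Fin.forall_fin_two, rpow_nonneg, hb, hd])
    (by simpa using h1) (by simpa using h2)
  simp only [Fin.sum_univ_two, Matrix.cons_val_zero, Matrix.cons_val_one] at dresher
  have hden : a ^ p + b ^ p + (c ^ p + d ^ p) ≤ (a + b) ^ p + (c + d) ^ p :=
    add_le_add (add_rpow_le_rpow_add ha hb hp) (add_rpow_le_rpow_add hc hd hp)
  have hexp : 1 / (p * ((k : ℝ) - 1)) = 1 / ((k : ℝ) - 1) * (1 / p) := by
    rw [one_div_mul_one_div, mul_comm]
  simp only [← rpow_natCast (_ + _), rpow_mul ha, rpow_mul hb, rpow_mul hc, rpow_mul hd, hexp]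
  have hS : 0 < a ^ p + b ^ p + (c ^ p + d ^ p) := by
    linarith [rpow_nonneg hb p, rpow_nonneg hd p]
  rw [rpow_mul (by positivity), rpow_mul (by positivity), rpow_mul (by positivity)]
  calc _ ≤ ((((a ^ p + b ^ p) ^ (k : ℝ) + (c ^ p + d ^ p) ^ (k : ℝ)) /
          (a ^ p + b ^ p + (c ^ p + d ^ p))) ^ (1 / ((k : ℝ) - 1))) ^ (1 / p) := by
        gcongr
    _ ≤ _ := by gcongr
    _ ≤ _ := rpow_add_le_add_rpow (by positivity) (by positivity) (by positivity)
        (by rw [div_le_one (by positivity)]; exact hp)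

/-- Let `a, b, c, d ≥ 0` (with the denominators positive), `p ≥ 1`, and
`k ≥ 2` an integer. Then
`(((a^p+b^p)^k + (c^p+d^p)^k)/((a+b)^p + (c+d)^p))^(1/(p(k-1)))
  ≤ ((a^(pk)+c^(pk))/(a^p+c^p))^(1/(p(k-1))) + ((b^(pk)+d^(pk))/(b^p+d^p))^(1/(p(k-1)))`. -/
theorem dresher_style_inequality (a b c d : ℝ)
    (ha : 0 ≤ a) (hb : 0 ≤ b) (hc : 0 ≤ c) (hd : 0 ≤ d)
    (p : ℝ) (hp : 1 ≤ p) (k : ℕ) (hk : 2 ≤ k)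
    (h1 : 0 < a ^ p + c ^ p) (h2 : 0 < b ^ p + d ^ p)
    (h3 : 0 < (a + b) ^ p + (c + d) ^ p) :
    (((a ^ p + b ^ p) ^ k + (c ^ p + d ^ p) ^ k) /
        ((a + b) ^ p + (c + d) ^ p)) ^ (1 / (p * ((k : ℝ) - 1))) ≤
      ((a ^ (p * (k : ℝ)) + c ^ (p * (k : ℝ))) /
          (a ^ p + c ^ p)) ^ (1 / (p * ((k : ℝ) - 1))) +
      ((b ^ (p * (k : ℝ)) + d ^ (p * (k : ℝ))) /
          (b ^ p + d ^ p)) ^ (1 / (p * ((k : ℝ) - 1))) :=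
  dresher_style_inequality_general a b c d ha hb hc hd p hp k hk h1 h2
end
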